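/- arXiv:1906.09822 — 6 statements merged into one kernel-verified Lean document; each statement's English description precedes it below -/
import Mathlib

section
/- For a citation vector x = ⟨x₁,…,xₙ⟩ (a finite nonincreasing list of positive integers) and the vector x^[k] obtained from x by adding one citation to publication k (where k is the smallest index j with x_j = x_k, so that x^[k] is still nonincreasing), the rec-index satisfies rec(x^[k]) = max(rec(x), k·(x_k + 1)). -/
/-- A citation vector: a finite nonincreasing list of positive integers. -/
def CitVec (x : List ℕ) : Prop :=
  (∀ a ∈ x, 0 < a) ∧ List.Pairwise (· ≥ ·) x

/-- The rec-index: max over 1 ≤ i ≤ n of i·x_i (0 for the empty vector). -/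
def recIdx (x : List ℕ) : ℕ :=
  ((List.range x.length).map (fun i => (i + 1) * x.getD i 0)).foldr max 0

/-- Domination: u ⊑ x. -/
def Dom (u x : List ℕ) : Prop :=
  u.length ≤ x.length ∧ ∀ i < u.length, u.getD i 0 ≤ x.getD i 0

/-- Uniform: all entries equal. -/
def Uniform (x : List ℕ) : Prop := ∀ a ∈ x, ∀ b ∈ x, a = b

/-- x^[k]: add one citation to publication k (1-indexed; append a 1 if k = n+1). -/
def incr (x : List ℕ) (k : ℕ) : List ℕ :=
  if k ≤ x.length then x.set (k - 1) (x.getD (k - 1) 0 + 1) else x ++ [1]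

/-- k is the smallest index j with x_j = x_k (taking x_{n+1} = 0);
equivalently all earlier entries are strictly larger. -/
def MinIndex (x : List ℕ) (k : ℕ) : Prop :=
  1 ≤ k ∧ k ≤ x.length + 1 ∧ ∀ j, 1 ≤ j → j < k → x.getD (k - 1) 0 < x.getD (j - 1) 0

/-! Incrementing entry `k` (or appending a `1`) changes exactly one of the terms `i * xᵢ`
whose maximum is `rec`, and raises it to `k * (x_k + 1)`. -/

theorem recIdx_eq_sup (x : List ℕ) :
    recIdx x = (Finset.range x.length).sup fun i => (i + 1) * x.getD i 0 := by
  rw [Finset.sup_def, Finset.range_val, Multiset.range, Multiset.map_coe, Multiset.sup_coe]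
  rfl

theorem Finset.sup_update_of_le {α β : Type*} [DecidableEq α] [SemilatticeSup β] [OrderBot β]
    {s : Finset α} {a : α} (ha : a ∈ s) (f : α → β) {b : β} (hb : f a ≤ b) :
    s.sup (Function.update f a b) = s.sup f ⊔ b := by
  rw [← Finset.insert_erase ha, Finset.sup_insert, Finset.sup_insert,
    Finset.sup_congr rfl fun i hi => Function.update_of_ne (Finset.ne_of_mem_erase hi) b f,
    Function.update_self, sup_right_comm, sup_eq_right.mpr hb]

theorem recIdx_set_of_le (x : List ℕ) {i : ℕ} (hi : i < x.length) {v : ℕ}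
    (hv : x.getD i 0 ≤ v) :
    recIdx (x.set i v) = max (recIdx x) ((i + 1) * v) := by
  have hterms : (fun j => (j + 1) * (x.set i v).getD j 0) =
      Function.update (fun j => (j + 1) * x.getD j 0) i ((i + 1) * v) := by
    funext j
    rcases eq_or_ne j i with rfl | hj
    · simp [List.getD_eq_getElem?_getD, hi]
    · simp [List.getD_eq_getElem?_getD, List.getElem?_set_ne (Ne.symm hj), hj]
  rw [recIdx_eq_sup, recIdx_eq_sup, List.length_set, hterms,
    Finset.sup_update_of_le (Finset.mem_range.mpr hi) (fun j => (j + 1) * x.getD j 0)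
      (Nat.mul_le_mul_left _ hv)]

theorem recIdx_append_one (x : List ℕ) :
    recIdx (x ++ [1]) = max (recIdx x) (x.length + 1) := by
  rw [recIdx_eq_sup, recIdx_eq_sup, List.length_append, List.length_singleton,
    Finset.range_add_one, Finset.sup_insert, sup_comm,
    Finset.sup_congr rfl fun i hi => by rw [List.getD_append _ _ _ _ (Finset.mem_range.mp hi)]]
  simp

theorem rec_incr_general (x : List ℕ) (k : ℕ) (hk : MinIndex x k) :
    recIdx (incr x k) = max (recIdx x) (k * (x.getD (k - 1) 0 + 1)) := by
  obtain ⟨hk1, hkn, -⟩ := hk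
  unfold incr
  split_ifs with h
  · rw [recIdx_set_of_le x (by omega) (Nat.le_succ _), Nat.sub_add_cancel hk1]
  · have hk : k = x.length + 1 := by omega
    subst hk
    simp [recIdx_append_one]

theorem rec_incr (x : List ℕ) (k : ℕ) (hx : CitVec x) (hk : MinIndex x k) :
    recIdx (incr x k) = max (recIdx x) (k * (x.getD (k - 1) 0 + 1)) :=
  rec_incr_general x k hk
end

section
/- If a bibliometric index f satisfies monotonicity, uniform citation, and uniform equivalence, then f satisfies citation increase: if y is obtained from a nonempty citation vector x by adding one citation to every publication (y_i = x_i + 1 for all i), then f(y) > f(x). -/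
/-!
Take a uniform `u ⊑ x` with `f x = f u = ‖u‖`. Adding one citation to every entry of `u` gives a
uniform `v ⊑ x + 1` with `‖v‖ = ‖u‖ + |u| > ‖u‖` (if `u` is empty, take `v = ⟨1⟩`, which `x + 1`
dominates because `x` is nonempty). Hence `f x = ‖u‖ < ‖v‖ = f v ≤ f (x + 1)` by monotonicity.
-/

section

variable {u x : List ℕ}

theorem Uniform.map (g : ℕ → ℕ) (hu : Uniform u) : Uniform (u.map g) := by
  simp only [Uniform, List.mem_map]
  rintro _ ⟨a, ha, rfl⟩ _ ⟨b, hb, rfl⟩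
  rw [hu a ha b hb]

theorem CitVec.map_succ (hx : CitVec x) : CitVec (x.map (· + 1)) :=
  ⟨by simp, hx.2.map _ fun _ _ h => Nat.succ_le_succ h⟩

theorem Dom.map {g : ℕ → ℕ} (hg : Monotone g) (h : Dom u x) : Dom (u.map g) (x.map g) := by
  refine ⟨by simpa using h.1, fun i hi => ?_⟩
  rw [List.length_map] at hi
  have hix : i < x.length := hi.trans_le h.1
  rw [List.getD_eq_getElem _ _ (by simpa using hi), List.getD_eq_getElem _ _ (by simpa using hix),
    List.getElem_map, List.getElem_map]
  apply hg
  have := h.2 i hi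
  rwa [List.getD_eq_getElem _ _ hi, List.getD_eq_getElem _ _ hix] at this

theorem dom_singleton_one_map_succ (hx : x ≠ []) : Dom [1] (x.map (· + 1)) := by
  obtain ⟨a, t, rfl⟩ := List.exists_cons_of_ne_nil hx
  exact ⟨by simp, by simp⟩

theorem sum_map_succ (u : List ℕ) : (u.map (· + 1)).sum = u.sum + u.length := by
  induction u with
  | nil => rfl
  | cons a t ih => simp only [List.map_cons, List.sum_cons, List.length_cons, ih]; ring

theorem exists_uniform_dom_map_succ_sum_gt (hu : CitVec u) (huni : Uniform u) (hdom : Dom u x)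
    (hx : x ≠ []) :
    ∃ v, CitVec v ∧ Uniform v ∧ Dom v (x.map (· + 1)) ∧ u.sum < v.sum := by
  rcases u.eq_nil_or_concat' with rfl | ⟨t, a, rfl⟩
  · exact ⟨[1], ⟨by simp, by simp⟩, by simp [Uniform], dom_singleton_one_map_succ hx, by simp⟩
  · refine ⟨_, hu.map_succ, huni.map _, hdom.map fun _ _ h => Nat.succ_le_succ h, ?_⟩
    rw [sum_map_succ]
    simp

end

theorem citation_increase_general (f : List ℕ → ℝ)
    (hM : ∀ x y, CitVec x → CitVec y → Dom x y → f x ≤ f y)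
    (hUC : ∀ x, CitVec x → Uniform x → f x = x.sum)
    (hUE : ∀ x, CitVec x → ∃ u, CitVec u ∧ Uniform u ∧ Dom u x ∧ f x = f u) :
    ∀ x, CitVec x → x ≠ [] → f x < f (x.map (· + 1)) := by
  intro x hx hne
  obtain ⟨u, hu, huni, hdom, hfx⟩ := hUE x hx
  obtain ⟨v, hv, hvuni, hvdom, hsum⟩ := exists_uniform_dom_map_succ_sum_gt hu huni hdom hne
  calc f x = u.sum := by rw [hfx, hUC u hu huni]
    _ < v.sum := by exact_mod_cast hsum
    _ = f v := (hUC v hv hvuni).symm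
    _ ≤ f (x.map (· + 1)) := hM v _ hv hx.map_succ hvdom

theorem citation_increase (f : List ℕ → ℝ)
    (hnonneg : ∀ x, CitVec x → 0 ≤ f x) (hbase : f [] = 0)
    (hM : ∀ x y, CitVec x → CitVec y → Dom x y → f x ≤ f y)
    (hUC : ∀ x, CitVec x → Uniform x → f x = x.sum)
    (hUE : ∀ x, CitVec x → ∃ u, CitVec u ∧ Uniform u ∧ Dom u x ∧ f x = f u) :
    ∀ x, CitVec x → x ≠ [] → f x < f (x.map (· + 1)) :=
  citation_increase_general f hM hUC hUE
end

section
/- The index f(x) = (rec(x) + ||x||)/2 satisfies monotonicity and uniform citation but does not satisfy uniform equivalence. -/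
/-- The index (rec(x) + ||x||)/2. -/
noncomputable def avgIdx (x : List ℕ) : ℝ := ((recIdx x : ℝ) + (x.sum : ℝ)) / 2

/-!
A uniform vector `u = ⟨c, …, c⟩` of length `n` has `rec(u) = ||u|| = n c`, so `f(u) = rec(u)`.
If `u ⊑ x` then `f(x) = f(u) = rec(u) ≤ rec(x)` by monotonicity of `rec`, which forces
`||x|| ≤ rec(x)`. This fails for `x = ⟨2,1⟩`, where `rec(x) = 2 < 3 = ||x||`.
-/

lemma sum_eq_sum_range_getD (x : List ℕ) :
    x.sum = ∑ i ∈ Finset.range x.length, x.getD i 0 := by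
  induction x with
  | nil => simp
  | cons a t ih => simp [Finset.sum_range_succ', ih, add_comm]

lemma le_recIdx {x : List ℕ} {i : ℕ} (hi : i < x.length) :
    (i + 1) * x.getD i 0 ≤ recIdx x :=
  List.le_max_of_le (List.mem_map.mpr ⟨i, List.mem_range.mpr hi, rfl⟩) le_rfl

lemma recIdx_le_iff {x : List ℕ} {m : ℕ} :
    recIdx x ≤ m ↔ ∀ i < x.length, (i + 1) * x.getD i 0 ≤ m := by
  refine ⟨fun h i hi => (le_recIdx hi).trans h, fun h => List.max_le_of_forall_le _ _ ?_⟩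
  simp only [List.mem_map, List.mem_range, forall_exists_index, and_imp]
  rintro _ i hi rfl
  exact h i hi

lemma recIdx_replicate (n c : ℕ) : recIdx (List.replicate n c) = n * c := by
  refine le_antisymm (recIdx_le_iff.mpr fun i hi => ?_) ?_
  · rw [List.length_replicate] at hi
    rw [List.getD_replicate _ hi]
    exact Nat.mul_le_mul_right c hi
  · rcases n with _ | n
    · simp
    · simpa [List.getD_replicate] using
        le_recIdx (x := List.replicate (n + 1) c) (i := n) (by simp)

lemma Uniform.exists_eq_replicate {x : List ℕ} (hx : Uniform x) :
    ∃ n c, x = List.replicate n c := by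
  rcases x with _ | ⟨a, t⟩
  · exact ⟨0, 0, rfl⟩
  · exact ⟨_, a, List.eq_replicate_iff.mpr ⟨rfl, fun b hb => hx b hb a List.mem_cons_self⟩⟩

lemma Uniform.recIdx_eq_sum {x : List ℕ} (hx : Uniform x) : recIdx x = x.sum := by
  obtain ⟨n, c, rfl⟩ := hx.exists_eq_replicate
  rw [recIdx_replicate, List.sum_replicate, smul_eq_mul]

lemma Dom.sum_le {u x : List ℕ} (h : Dom u x) : u.sum ≤ x.sum := by
  rw [sum_eq_sum_range_getD u, sum_eq_sum_range_getD x]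
  calc ∑ i ∈ Finset.range u.length, u.getD i 0
      ≤ ∑ i ∈ Finset.range u.length, x.getD i 0 :=
        Finset.sum_le_sum fun i hi => h.2 i (Finset.mem_range.mp hi)
    _ ≤ ∑ i ∈ Finset.range x.length, x.getD i 0 :=
        Finset.sum_le_sum_of_subset (Finset.range_subset_range.mpr h.1)

lemma Dom.recIdx_le {u x : List ℕ} (h : Dom u x) : recIdx u ≤ recIdx x :=
  recIdx_le_iff.mpr fun i hi =>
    (Nat.mul_le_mul_left _ (h.2 i hi)).trans (le_recIdx (hi.trans_le h.1))

lemma Dom.avgIdx_le {u x : List ℕ} (h : Dom u x) : avgIdx u ≤ avgIdx x := by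
  unfold avgIdx
  gcongr
  · exact h.recIdx_le
  · exact h.sum_le

lemma Uniform.avgIdx_eq_sum {x : List ℕ} (hx : Uniform x) : avgIdx x = x.sum := by
  rw [avgIdx, hx.recIdx_eq_sum]
  ring

lemma sum_le_recIdx_of_avgIdx_eq {u x : List ℕ} (hu : Uniform u) (hux : Dom u x)
    (h : avgIdx x = avgIdx u) : x.sum ≤ recIdx x := by
  have hrec : (recIdx u : ℝ) ≤ recIdx x := by exact_mod_cast hux.recIdx_le
  rw [hu.avgIdx_eq_sum, ← hu.recIdx_eq_sum, avgIdx] at h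
  exact_mod_cast (show (x.sum : ℝ) ≤ recIdx x by linarith)

theorem avg_M_UC_not_UE :
    (∀ x y, CitVec x → CitVec y → Dom x y → avgIdx x ≤ avgIdx y) ∧
    (∀ x, CitVec x → Uniform x → avgIdx x = x.sum) ∧
    ¬ (∀ x, CitVec x → ∃ u, CitVec u ∧ Uniform u ∧ Dom u x ∧ avgIdx x = avgIdx u) := by
  refine ⟨fun x y _ _ h => h.avgIdx_le, fun x _ hx => hx.avgIdx_eq_sum, fun h => ?_⟩
  obtain ⟨u, -, hu, hux, heq⟩ := h [2, 1] ⟨by decide, by decide⟩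
  exact absurd (sum_le_recIdx_of_avgIdx_eq hu hux heq) (by decide)
end

section
/- The index f(x) = n·x_n (the number of publications times the minimum citation count, with f(⟨⟩) = 0) satisfies uniform citation and uniform equivalence but is not monotonic. -/
/-- The index n·x_n: number of publications times minimum citation count. -/
def minIdx (x : List ℕ) : ℕ := x.length * x.getD (x.length - 1) 0

/-! For a uniform vector ⟨a, …, a⟩ of length n both n·x_n and the citation count equal n·a, and
the uniform vector ⟨x_n, …, x_n⟩ of the same length as x is dominated by x (its last entry is the
smallest) and has the same index. Monotonicity fails because adding a weakly cited publication can
lower the minimum citation count more than it raises the number of publications: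
⟨3⟩ ⊑ ⟨3, 1⟩ while f⟨3⟩ = 3 > 2 = f⟨3, 1⟩. -/

theorem getD_length_sub_one_mem {x : List ℕ} (hx : x ≠ []) : x.getD (x.length - 1) 0 ∈ x := by
  rw [List.getD_eq_getElem _ _ (by simpa [Nat.pos_iff_ne_zero] using hx)]
  exact List.getElem_mem _

theorem getD_length_sub_one_le {x : List ℕ} (hx : List.Pairwise (· ≥ ·) x) {i : ℕ}
    (hi : i < x.length) : x.getD (x.length - 1) 0 ≤ x.getD i 0 := by
  rw [List.getD_eq_getElem _ _ (by omega), List.getD_eq_getElem _ _ hi]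
  rcases (Nat.le_sub_one_of_lt hi).lt_or_eq with hlt | heq
  · exact List.pairwise_iff_getElem.mp hx _ _ hi (by omega) hlt
  · simp [heq]

theorem minIdx_replicate (n a : ℕ) : minIdx (List.replicate n a) = n * a := by
  rcases Nat.eq_zero_or_pos n with rfl | hn
  · simp [minIdx]
  · rw [minIdx, List.length_replicate, List.getD_replicate _ (by omega)]

theorem uniform_replicate (n a : ℕ) : Uniform (List.replicate n a) := by
  intro b hb c hc
  rw [List.eq_of_mem_replicate hb, List.eq_of_mem_replicate hc]

theorem Uniform.eq_replicate {x : List ℕ} (hx : Uniform x) : ∃ a, x = List.replicate x.length a := by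
  cases x with
  | nil => exact ⟨0, rfl⟩
  | cons b l => exact ⟨b, List.eq_replicate_iff.mpr ⟨rfl, fun c hc => hx c hc b List.mem_cons_self⟩⟩

theorem Uniform.minIdx_eq_sum {x : List ℕ} (hx : Uniform x) : minIdx x = x.sum := by
  obtain ⟨a, hxa⟩ := hx.eq_replicate
  rw [hxa, minIdx_replicate, List.sum_replicate, smul_eq_mul]

def minUniform (x : List ℕ) : List ℕ := List.replicate x.length (x.getD (x.length - 1) 0)

theorem citVec_minUniform {x : List ℕ} (hx : CitVec x) : CitVec (minUniform x) := by
  refine ⟨fun a ha => ?_, List.pairwise_replicate.mpr (Or.inr le_rfl)⟩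
  have hne : x ≠ [] := by rintro rfl; simp [minUniform] at ha
  rw [List.eq_of_mem_replicate ha]
  exact hx.1 _ (getD_length_sub_one_mem hne)

theorem dom_minUniform {x : List ℕ} (hx : List.Pairwise (· ≥ ·) x) : Dom (minUniform x) x := by
  refine ⟨(List.length_replicate ..).le, fun i hi => ?_⟩
  rw [minUniform, List.length_replicate] at hi
  rw [minUniform, List.getD_replicate _ hi]
  exact getD_length_sub_one_le hx hi

theorem minIdx_minUniform (x : List ℕ) : minIdx (minUniform x) = minIdx x :=
  minIdx_replicate _ _

theorem min_UC_UE_not_M :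
    (∀ x, CitVec x → Uniform x → (minIdx x : ℝ) = x.sum) ∧
    (∀ x, CitVec x → ∃ u, CitVec u ∧ Uniform u ∧ Dom u x ∧ (minIdx x : ℝ) = minIdx u) ∧
    ¬ (∀ x y, CitVec x → CitVec y → Dom x y → (minIdx x : ℝ) ≤ minIdx y) := by
  refine ⟨fun x _ hu => mod_cast hu.minIdx_eq_sum, fun x hx => ?_, fun hmono => ?_⟩
  · exact ⟨minUniform x, citVec_minUniform hx, uniform_replicate _ _, dom_minUniform hx.2,
      mod_cast (minIdx_minUniform x).symm⟩
  · have hx : CitVec [3] := ⟨by simp, by simp⟩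
    have hy : CitVec [3, 1] := ⟨by simp, by simp⟩
    have hxy : Dom [3] [3, 1] := ⟨by simp, by simp⟩
    have := hmono _ _ hx hy hxy
    norm_num [minIdx] at this
end

section
/- For any citation vector x, rec(x) = ||x|| if and only if x is uniform (all entries equal) or empty. -/
lemma foldr_max_le {l : List ℕ} {m : ℕ} (h : ∀ a ∈ l, a ≤ m) : l.foldr max 0 ≤ m := by
  induction l with
  | nil => simp
  | cons a t ih =>
    simp only [List.foldr_cons, max_le_iff]
    exact ⟨h a (by simp), ih fun b hb => h b (List.mem_cons_of_mem _ hb)⟩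

lemma le_foldr_max {l : List ℕ} {a : ℕ} (h : a ∈ l) : a ≤ l.foldr max 0 := by
  induction l with
  | nil => simp at h
  | cons b t ih =>
    simp only [List.foldr_cons]
    rcases List.mem_cons.1 h with rfl | h
    · exact le_max_left _ _
    · exact le_trans (ih h) (le_max_right _ _)

lemma foldr_max_mem {l : List ℕ} : l.foldr max 0 = 0 ∨ l.foldr max 0 ∈ l := by
  induction l with
  | nil => simp
  | cons a t ih =>
    simp only [List.foldr_cons]
    rcases le_total (t.foldr max 0) a with h | h
    · right; simp [max_eq_left h]
    · rw [max_eq_right h]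
      rcases ih with h0 | hm
      · left; exact h0
      · right; exact List.mem_cons_of_mem _ hm

lemma length_mul_le_sum {l : List ℕ} {c : ℕ} (h : ∀ a ∈ l, c ≤ a) : l.length * c ≤ l.sum := by
  induction l with
  | nil => simp
  | cons a t ih =>
    simp only [List.length_cons, List.sum_cons, Nat.succ_mul]
    rw [Nat.add_comm a]
    exact Nat.add_le_add (ih fun b hb => h b (List.mem_cons_of_mem _ hb)) (h a (by simp))

lemma all_eq_of_sum_eq {l : List ℕ} {c : ℕ} (h : ∀ a ∈ l, c ≤ a)
    (hs : l.sum = l.length * c) : ∀ a ∈ l, a = c := by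
  induction l with
  | nil => simp
  | cons a t ih =>
    have ht : ∀ b ∈ t, c ≤ b := fun b hb => h b (List.mem_cons_of_mem _ hb)
    have h1 : t.length * c ≤ t.sum := length_mul_le_sum ht
    have h2 : c ≤ a := h a (by simp)
    simp only [List.sum_cons, List.length_cons, Nat.succ_mul] at hs
    have ha : a = c := by omega
    have hts : t.sum = t.length * c := by omega
    intro b hb
    rcases List.mem_cons.1 hb with rfl | hb
    · exact ha
    · exact ih ht hts b hb

theorem rec_eq_sum_iff_uniform (x : List ℕ) (hx : CitVec x) :
    recIdx x = x.sum ↔ Uniform x := by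
  obtain ⟨hpos, hsort⟩ := hx
  have hmono : ∀ j i : ℕ, j ≤ i → ∀ hi : i < x.length, x.getD i 0 ≤ x.getD j 0 := by
    intro j i hji hi
    have hj : j < x.length := lt_of_le_of_lt hji hi
    rw [List.getD_eq_getElem _ _ hi, List.getD_eq_getElem _ _ hj]
    rcases eq_or_lt_of_le hji with rfl | h
    · exact le_refl _
    · exact List.pairwise_iff_getElem.mp hsort j i hj hi h
  -- each term ≤ sum of the (i+1)-prefix
  have hterm : ∀ i : ℕ, i < x.length → (i + 1) * x.getD i 0 ≤ (x.take (i + 1)).sum := by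
    intro i hi
    have hlen : (x.take (i + 1)).length = i + 1 := by
      rw [List.length_take]; omega
    have hall : ∀ a ∈ x.take (i + 1), x.getD i 0 ≤ a := by
      intro a ha
      obtain ⟨j, hj, rfl⟩ := List.mem_iff_getElem.mp ha
      rw [List.getElem_take]
      have hjlt : j < i + 1 := by rw [hlen] at hj; exact hj
      have h := hmono j i (by omega) hi
      rw [List.getD_eq_getElem _ _ hi]
      rwa [List.getD_eq_getElem _ _ hi,
        List.getD_eq_getElem _ _ (by omega : j < x.length)] at h
    calc (i + 1) * x.getD i 0 = (x.take (i + 1)).length * x.getD i 0 := by rw [hlen]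
      _ ≤ (x.take (i + 1)).sum := length_mul_le_sum hall
  have htermsum : ∀ i : ℕ, i < x.length → (i + 1) * x.getD i 0 ≤ x.sum := by
    intro i hi
    have := hterm i hi
    have h2 : (x.take (i + 1)).sum ≤ x.sum := by
      conv_rhs => rw [← List.take_append_drop (i + 1) x]
      rw [List.sum_append]; omega
    omega
  have hle : recIdx x ≤ x.sum := by
    apply foldr_max_le
    intro a ha
    obtain ⟨i, hi, rfl⟩ := List.mem_map.mp ha
    exact htermsum i (List.mem_range.mp hi)
  constructor
  · intro heq
    rcases eq_or_ne x [] with rfl | hne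
    · intro a ha; simp at ha
    · have hn : 0 < x.length := List.length_pos_iff.mpr hne
      have hsumpos : 0 < x.sum := by
        have h0 : x.getD 0 0 ∈ x := by
          rw [List.getD_eq_getElem _ _ hn]; exact List.getElem_mem _
        have := hpos _ h0
        have : x.getD 0 0 ≤ x.sum := List.single_le_sum (by simp) _ h0
        omega
      rcases foldr_max_mem (l := (List.range x.length).map (fun i => (i + 1) * x.getD i 0)) with h0 | hmem
      · rw [recIdx] at heq; omega
      · obtain ⟨i, hi', hival⟩ := List.mem_map.mp hmem
        have hi : i < x.length := List.mem_range.mp hi'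
        rw [recIdx] at heq
        rw [heq] at hival
        have hival' : (i + 1) * x.getD i 0 = x.sum := hival
        have hsplit : (x.take (i + 1)).sum + (x.drop (i + 1)).sum = x.sum := by
          conv_rhs => rw [← List.take_append_drop (i + 1) x]
          rw [List.sum_append]
        have htk := hterm i hi
        have hdrop0 : (x.drop (i + 1)).sum = 0 := by
          have h1 := htk
          omega
        have hdropnil : x.drop (i + 1) = [] := by
          by_contra hdne
          obtain ⟨a, ha⟩ := List.exists_mem_of_ne_nil _ hdne
          have hax : a ∈ x := List.mem_of_mem_drop ha
          have h1 := hpos a hax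
          have h2 : a ≤ (x.drop (i + 1)).sum := List.single_le_sum (by simp) _ ha
          omega
        have hxlen : x.length ≤ i + 1 := by
          have := List.drop_eq_nil_iff.mp hdropnil
          omega
        have hxtake : x.take (i + 1) = x := List.take_of_length_le (by omega)
        have hlen : x.length = i + 1 := by omega
        have hsum' : x.sum = x.length * (x.getD i 0) := by rw [hlen]; omega
        have hallc : ∀ a ∈ x, x.getD i 0 ≤ a := by
          intro a ha
          obtain ⟨j, hj, rfl⟩ := List.mem_iff_getElem.mp ha
          rw [← List.getD_eq_getElem _ _ hj]
          exact hmono j i (by omega) hi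
        have hall := all_eq_of_sum_eq hallc hsum'
        intro a ha b hb
        rw [hall a ha, hall b hb]
  · intro hu
    rcases eq_or_ne x [] with rfl | hne
    · simp [recIdx]
    · have hn : 0 < x.length := List.length_pos_iff.mpr hne
      set c := x.getD 0 0 with hc
      have h0mem : c ∈ x := by
        rw [hc, List.getD_eq_getElem _ _ hn]; exact List.getElem_mem _
      have hall : ∀ a ∈ x, a = c := fun a ha => hu a ha c h0mem
      have hsum : x.sum = x.length * c := by
        have := List.sum_eq_card_nsmul x c hall
        simpa using this
      apply le_antisymm hle
      -- sum = length * x.getD (length-1) 0, which is a term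
      have hlast : x.length * x.getD (x.length - 1) 0 ∈
          (List.range x.length).map (fun i => (i + 1) * x.getD i 0) := by
        apply List.mem_map.mpr
        exact ⟨x.length - 1, List.mem_range.mpr (by omega), by congr 1; omega⟩
      have hlastval : x.getD (x.length - 1) 0 = c := by
        have hm : x.getD (x.length - 1) 0 ∈ x := by
          rw [List.getD_eq_getElem _ _ (by omega)]; exact List.getElem_mem _
        exact hall _ hm
      rw [hsum, ← hlastval]
      exact le_foldr_max hlast
end

section
/- A bibliometric index f satisfies rectangle completion if and only if f is the rec-index; moreover rectangle completion implies monotonicity. -/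
lemma term_le_recIdx {x : List ℕ} {i : ℕ} (h : i < x.length) :
    (i + 1) * x.getD i 0 ≤ recIdx x :=
  le_foldr_max (by simp only [List.mem_map, List.mem_range]; exact ⟨i, h, rfl⟩)

lemma recIdx_le {x : List ℕ} {m : ℕ} (h : ∀ i < x.length, (i + 1) * x.getD i 0 ≤ m) :
    recIdx x ≤ m := by
  apply foldr_max_le
  intro a ha
  simp only [List.mem_map, List.mem_range] at ha
  obtain ⟨i, hi, rfl⟩ := ha
  exact h i hi

lemma getD_append_last (l : List ℕ) (v : ℕ) : (l ++ [v]).getD l.length 0 = v := by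
  rw [List.getD_eq_getElem _ _ (by simp)]
  simp

lemma recIdx_append (l : List ℕ) (v : ℕ) :
    recIdx (l ++ [v]) = max (recIdx l) ((l.length + 1) * v) := by
  apply le_antisymm
  · apply recIdx_le
    intro i hi
    simp only [List.length_append, List.length_singleton] at hi
    rcases lt_or_eq_of_le (Nat.lt_succ_iff.1 hi) with h | rfl
    · rw [List.getD_append _ _ _ _ h]
      exact le_trans (term_le_recIdx h) (le_max_left _ _)
    · rw [getD_append_last]
      exact le_max_right _ _
  · apply max_le
    · apply recIdx_le
      intro i hi
      rw [← List.getD_append _ [v] _ _ hi]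
      exact term_le_recIdx (by simp; omega)
    · have := term_le_recIdx (x := l ++ [v]) (i := l.length) (by simp)
      rwa [getD_append_last] at this

lemma getD_set_self {x : List ℕ} {i : ℕ} (h : i < x.length) (w : ℕ) :
    (x.set i w).getD i 0 = w := by
  rw [List.getD_eq_getElem _ _ (by simpa)]
  simp [List.getElem_set, h]

lemma getD_set_ne {x : List ℕ} {i j : ℕ} (h : j ≠ i) (w : ℕ) :
    (x.set i w).getD j 0 = x.getD j 0 := by
  by_cases hj : j < x.length
  · rw [List.getD_eq_getElem _ _ (by simpa), List.getD_eq_getElem _ _ hj]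
    simp [List.getElem_set, h.symm]
  · rw [List.getD_eq_default _ _ (by simpa using hj), List.getD_eq_default _ _ (by omega)]

lemma recIdx_set {x : List ℕ} {i w : ℕ} (hi : i < x.length) (hw : x.getD i 0 ≤ w) :
    recIdx (x.set i w) = max (recIdx x) ((i + 1) * w) := by
  apply le_antisymm
  · apply recIdx_le
    intro j hj
    rw [List.length_set] at hj
    by_cases h : j = i
    · subst h; rw [getD_set_self hj]; exact le_max_right _ _
    · rw [getD_set_ne h]; exact le_trans (term_le_recIdx hj) (le_max_left _ _)
  · apply max_le
    · apply recIdx_le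
      intro j hj
      by_cases h : j = i
      · subst h
        calc (j+1) * x.getD j 0 ≤ (j+1) * w := Nat.mul_le_mul_left _ hw
          _ = (j+1) * (x.set j w).getD j 0 := by rw [getD_set_self hj]
          _ ≤ _ := term_le_recIdx (by simpa)
      · rw [← getD_set_ne h w]; exact term_le_recIdx (by simpa)
    · have := term_le_recIdx (x := x.set i w) (i := i) (by simpa)
      rwa [getD_set_self hi] at this

lemma sorted_getD {x : List ℕ} (hx : List.Pairwise (· ≥ ·) x) {i j : ℕ}
    (hij : i ≤ j) (hj : j < x.length) : x.getD j 0 ≤ x.getD i 0 := by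
  rcases eq_or_lt_of_le hij with rfl | hij
  · exact le_refl _
  · rw [List.getD_eq_getElem _ _ hj, List.getD_eq_getElem _ _ (lt_trans hij hj)]
    exact (List.pairwise_iff_getElem.1 hx) i j _ _ hij

lemma getD_mem {x : List ℕ} {i : ℕ} (h : i < x.length) : x.getD i 0 ∈ x := by
  rw [List.getD_eq_getElem _ _ h]; exact List.getElem_mem _

lemma set_append_last (l : List ℕ) (a b : ℕ) : (l ++ [a]).set l.length b = l ++ [b] := by
  induction l with
  | nil => simp
  | cons c l ih => simp [ih]

lemma citvec_incr {x : List ℕ} {k : ℕ} (hx : CitVec x) (hk : MinIndex x k) :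
    CitVec (incr x k) := by
  obtain ⟨hk1, hk2, hk3⟩ := hk
  unfold incr
  by_cases h : k ≤ x.length
  · simp only [h, if_true]
    constructor
    · intro a ha
      rcases List.mem_or_eq_of_mem_set ha with ha | rfl
      · exact hx.1 a ha
      · omega
    · rw [List.pairwise_iff_getElem]
      intro i j hi hj hij
      rw [List.length_set] at hi hj
      rw [← List.getD_eq_getElem _ 0, ← List.getD_eq_getElem _ 0]
      by_cases hjk : j = k - 1
      · subst hjk
        rw [getD_set_self (by omega), getD_set_ne (by omega)]
        have := hk3 (i + 1) (by omega) (by omega)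
        simpa using this
      · rw [getD_set_ne hjk]
        by_cases hik : i = k - 1
        · rw [hik, getD_set_self (by omega)]
          have h2 : x.getD j 0 ≤ x.getD (k - 1) 0 := sorted_getD hx.2 (by omega) hj
          omega
        · rw [getD_set_ne hik]
          exact sorted_getD hx.2 (le_of_lt hij) hj
  · simp only [h, if_false]
    constructor
    · intro a ha
      rcases List.mem_append.1 ha with ha | ha
      · exact hx.1 a ha
      · simp at ha; omega
    · rw [List.pairwise_append]
      refine ⟨hx.2, by simp, ?_⟩
      intro a ha b hb
      simp at hb; subst hb
      exact hx.1 a ha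

lemma recIdx_incr {x : List ℕ} {k : ℕ} (hx : CitVec x) (hk : MinIndex x k) :
    recIdx (incr x k) = max (recIdx x) (k * (x.getD (k - 1) 0 + 1)) := by
  obtain ⟨hk1, hk2, hk3⟩ := hk
  unfold incr
  by_cases h : k ≤ x.length
  · simp only [h, if_true]
    rw [recIdx_set (by omega) (by omega)]
    congr 2
    omega
  · simp only [h, if_false]
    rw [recIdx_append]
    have hlen : k = x.length + 1 := by omega
    rw [List.getD_eq_default _ _ (by omega)]
    congr 2 <;> omega

lemma citvec_concat {y : List ℕ} {v : ℕ} (h : CitVec (y ++ [v])) :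
    CitVec y ∧ ∀ a ∈ y, v ≤ a := by
  obtain ⟨hp, hs⟩ := h
  rw [List.pairwise_append] at hs
  exact ⟨⟨fun a ha => hp a (by simp [ha]), hs.1⟩,
    fun a ha => by simpa using hs.2.2 a ha v (by simp)⟩

lemma f_eq_recIdx (f : List ℕ → ℝ) (hbase : f [] = 0)
    (hRC : ∀ x k, CitVec x → MinIndex x k →
        f (incr x k) = max (f x) ((k * (x.getD (k - 1) 0 + 1) : ℕ) : ℝ)) :
    ∀ N x, CitVec x → x.sum ≤ N → f x = recIdx x := by
  intro N
  induction N with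
  | zero =>
    intro x hx hs
    have hnil : x = [] := by
      cases x with
      | nil => rfl
      | cons a l => exfalso; have := hx.1 a (by simp); simp at hs; omega
    subst hnil; simp [hbase, recIdx]
  | succ N ih =>
    intro x hx hs
    rcases x.eq_nil_or_concat with rfl | ⟨y, v, hxy⟩
    · simp [hbase, recIdx]
    · rw [List.concat_eq_append] at hxy
      subst hxy
      obtain ⟨hcy, hvy⟩ := citvec_concat hx
      have hv : 0 < v := hx.1 v (by simp)
      by_cases hv1 : v = 1
      · subst hv1
        have hmin : MinIndex y (y.length + 1) := by
          refine ⟨by omega, by omega, fun j h1 h2 => ?_⟩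
          rw [Nat.add_sub_cancel, List.getD_eq_default _ _ (by omega)]
          exact hcy.1 _ (getD_mem (show j - 1 < y.length by omega))
        have hincr : incr y (y.length + 1) = y ++ [1] := by simp [incr]
        have hrc := hRC y (y.length + 1) hcy hmin
        rw [hincr, Nat.add_sub_cancel, List.getD_eq_default _ _ (by omega)] at hrc
        have hfy : f y = recIdx y := ih y hcy (by simp at hs; omega)
        have hN : max (recIdx y) ((y.length + 1) * (0 + 1)) = recIdx (y ++ [1]) := by
          rw [recIdx_append]
        rw [hrc, hfy, ← Nat.cast_max, hN]
      · have hcy' : CitVec (y ++ [v - 1]) := by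
          constructor
          · intro a ha
            rcases List.mem_append.1 ha with ha | ha
            · exact hcy.1 a ha
            · simp at ha; omega
          · rw [List.pairwise_append]
            refine ⟨hcy.2, by simp, fun a ha b hb => ?_⟩
            simp at hb; subst hb
            have := hvy a ha; omega
        have hmin : MinIndex (y ++ [v - 1]) (y.length + 1) := by
          refine ⟨by omega, by simp, fun j h1 h2 => ?_⟩
          rw [Nat.add_sub_cancel, getD_append_last, List.getD_append _ _ _ _ (by omega)]
          have := hvy _ (getD_mem (show j - 1 < y.length by omega))
          omega
        have hincr : incr (y ++ [v - 1]) (y.length + 1) = y ++ [v] := by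
          simp only [incr, List.length_append, List.length_singleton]
          rw [if_pos (by omega), Nat.add_sub_cancel, getD_append_last, set_append_last]
          congr 2
          omega
        have hrc := hRC (y ++ [v - 1]) (y.length + 1) hcy' hmin
        rw [hincr, Nat.add_sub_cancel, getD_append_last] at hrc
        have hfy' : f (y ++ [v - 1]) = recIdx (y ++ [v - 1]) := by
          apply ih _ hcy'
          simp at hs ⊢
          omega
        have hN : max (recIdx (y ++ [v - 1])) ((y.length + 1) * (v - 1 + 1)) =
            recIdx (y ++ [v]) := by
          rw [recIdx_append, recIdx_append]
          have hble : (y.length + 1) * (v - 1) ≤ (y.length + 1) * (v - 1 + 1) :=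
            Nat.mul_le_mul_left _ (by omega)
          rw [max_assoc, max_eq_right hble]
          congr 2
          omega
        rw [hrc, hfy', ← Nat.cast_max, hN]

theorem rectangle_completion_characterisation (f : List ℕ → ℝ)
    (hnonneg : ∀ x, CitVec x → 0 ≤ f x) (hbase : f [] = 0) :
    ((∀ x k, CitVec x → MinIndex x k →
        f (incr x k) = max (f x) ((k * (x.getD (k - 1) 0 + 1) : ℕ) : ℝ)) ↔
      (∀ x, CitVec x → f x = recIdx x)) ∧
    ((∀ x k, CitVec x → MinIndex x k →
        f (incr x k) = max (f x) ((k * (x.getD (k - 1) 0 + 1) : ℕ) : ℝ)) →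
      (∀ x y, CitVec x → CitVec y → Dom x y → f x ≤ f y)) := by
  constructor
  · constructor
    · intro hRC x hx
      exact f_eq_recIdx f hbase hRC x.sum x hx le_rfl
    · intro hrec x k hx hk
      rw [hrec (incr x k) (citvec_incr hx hk), hrec x hx, recIdx_incr hx hk, Nat.cast_max]
  · intro hRC x y hx hy hdom
    rw [f_eq_recIdx f hbase hRC x.sum x hx le_rfl,
      f_eq_recIdx f hbase hRC y.sum y hy le_rfl, Nat.cast_le]
    apply recIdx_le
    intro i hi
    calc (i + 1) * x.getD i 0 ≤ (i + 1) * y.getD i 0 := Nat.mul_le_mul_left _ (hdom.2 i hi)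
      _ ≤ recIdx y := term_le_recIdx (lt_of_lt_of_le hi hdom.1)
end
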